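/- Let J^L_k and J^F_k satisfy, respectively, J^L_k = 1/σ_u² − (m²/σ_u⁴)(J^L_{k−1} + m²/σ_u²)^{-1} + C and J^F_k = 1/(α²σ_u²) − (m²/(α²σ_u⁴))(J^F_{k−1} + m²/σ_u²)^{-1} + C/α², with 0 < α ≤ 1, σ_u > 0, C ≥ 0, and J^F_{k−1} ≥ J^L_{k−1} > 0. Then J^F_k ≥ J^L_k, i.e., model fusion does not decrease the Fisher information (equivalently, does not increase the BCLB). -/
import Mathlib


theorem fusion_increases_fisher (m σu C α JLp JFp JL JF : ℝ)
    (hσ : 0 < σu) (hC : 0 ≤ C) (hα : 0 < α) (hα1 : α ≤ 1)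
    (hJLp : 0 < JLp) (hJle : JLp ≤ JFp)
    (hL : JL = 1 / σu ^ 2 - (m ^ 2 / σu ^ 4) * (JLp + m ^ 2 / σu ^ 2)⁻¹ + C)
    (hF : JF = 1 / (α ^ 2 * σu ^ 2) - (m ^ 2 / (α ^ 2 * σu ^ 4)) * (JFp + m ^ 2 / σu ^ 2)⁻¹
      + C / α ^ 2) :
    JL ≤ JF := by
  have hσ2 : (0:ℝ) < σu ^ 2 := by positivity
  have hJFp : 0 < JFp := lt_of_lt_of_le hJLp hJle
  have hdL : 0 < σu ^ 2 * JLp + m ^ 2 := by positivity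
  have hdF : 0 < σu ^ 2 * JFp + m ^ 2 := by positivity
  have hα2 : (0:ℝ) < α ^ 2 := by positivity
  have e1 : JL = JLp / (σu ^ 2 * JLp + m ^ 2) + C := by
    rw [hL]; field_simp; ring
  have e2 : JF = (1 / α ^ 2) * (JFp / (σu ^ 2 * JFp + m ^ 2) + C) := by
    rw [hF]; field_simp; ring
  have hg : JLp / (σu ^ 2 * JLp + m ^ 2) ≤ JFp / (σu ^ 2 * JFp + m ^ 2) := by
    rw [div_le_div_iff₀ hdL hdF]; nlinarith
  have hgn : 0 ≤ JFp / (σu ^ 2 * JFp + m ^ 2) + C := by positivity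
  have h1α : 1 ≤ 1 / α ^ 2 := by
    rw [le_div_iff₀ hα2]; nlinarith
  calc JL = JLp / (σu ^ 2 * JLp + m ^ 2) + C := e1
    _ ≤ JFp / (σu ^ 2 * JFp + m ^ 2) + C := by linarith
    _ = 1 * (JFp / (σu ^ 2 * JFp + m ^ 2) + C) := (one_mul _).symm
    _ ≤ (1 / α ^ 2) * (JFp / (σu ^ 2 * JFp + m ^ 2) + C) :=
        mul_le_mul_of_nonneg_right h1α hgn
    _ = JF := e2.symm
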